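/- Let ℓ ≥ 3, 0 < a < b, and p = (p₁,…,p_ℓ) ∈ (ℝ²)^ℓ. Suppose q ∈ ℝ² is a singular point of F_p with q ≠ p_i for all i. Then the points p₂, p₃, …, p_ℓ all lie on a single line through q, namely the line through q with direction vector (a(q₁-p₁₁), b(q₂-p₁₂)). -/

import Mathlib

/-- The (rescaled) Jacobian matrix of the generalized distance-squared mapping
`F_p(x) = (a(x₁-p₁₁)² + b(x₂-p₁₂)², |x-p₂|², …, |x-p_ℓ|²)` at the point `q`. -/
noncomputable def Jmat (ℓ : ℕ) (a b : ℝ) (p : Fin ℓ → ℝ × ℝ) (q : ℝ × ℝ) :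
    Matrix (Fin ℓ) (Fin 2) ℝ :=
  fun i => if i.val = 0 then ![a * (q.1 - (p i).1), b * (q.2 - (p i).2)]
    else ![q.1 - (p i).1, q.2 - (p i).2]

/-- `q` is a singular point of `F_p`: the Jacobian matrix has rank < 2. -/
def IsSingular (ℓ : ℕ) (a b : ℝ) (p : Fin ℓ → ℝ × ℝ) (q : ℝ × ℝ) : Prop :=
  (Jmat ℓ a b p q).rank < 2

/-- The `2ℓ` real coordinates of a central point `p ∈ (ℝ²)^ℓ`. -/
def coords (ℓ : ℕ) (p : Fin ℓ → ℝ × ℝ) : Fin ℓ × Fin 2 → ℝ :=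
  fun ij => if ij.2.val = 0 then (p ij.1).1 else (p ij.1).2

/-!
At a singular point the 2×2 minor of the Jacobian formed by the first row and the row of `p_i`
vanishes, so `p_i - q` is parallel to the first row. That row is nonzero because `q ≠ p₁` and
`a, b ≠ 0`.
-/

theorem Matrix.det_submatrix_eq_zero_of_rank_lt {m n R : Type*} [Fintype n] [DecidableEq n]
    [CommRing R] [IsDomain R] {A : Matrix m n R} (hA : A.rank < Fintype.card n) (r : n → m) :
    (A.submatrix r id).det = 0 := by
  by_contra hdet
  have hfull := rank_of_det_mem_nonZeroDivisors (mem_nonZeroDivisors_of_ne_zero hdet)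
  exact hA.not_ge (hfull ▸ A.rank_submatrix_le r id)

theorem Prod.exists_eq_smul_of_mul_sub_mul_eq_zero {K : Type*} [Field K] {d w : K × K}
    (hd : d ≠ 0) (h : d.1 * w.2 - d.2 * w.1 = 0) : ∃ t : K, w = t • d := by
  by_cases h₁ : d.1 = 0
  · have h₂ : d.2 ≠ 0 := fun h₂ => hd (Prod.ext h₁ h₂)
    have hw₁ : w.1 = 0 := by simpa [h₁, h₂] using h
    refine ⟨w.2 / d.2, Prod.ext ?_ ?_⟩
    · simp [hw₁, h₁]
    · simp [div_mul_cancel₀ _ h₂]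
  · refine ⟨w.1 / d.1, Prod.ext ?_ ?_⟩
    · simp [div_mul_cancel₀ _ h₁]
    · simp only [Prod.smul_snd, smul_eq_mul]
      field_simp
      linear_combination h

/-- if q is a singular point of F_p with q ≠ p_i for all i, then the centers
p₂,…,p_ℓ all lie on the line through q with direction (a(q₁-p₁₁), b(q₂-p₁₂)). -/
theorem stmt9 (ℓ : ℕ) (hℓ : 3 ≤ ℓ) (a b : ℝ) (ha : 0 < a) (hab : a < b)
    (p : Fin ℓ → ℝ × ℝ) (q : ℝ × ℝ)
    (hsing : IsSingular ℓ a b p q) (hq : ∀ i : Fin ℓ, q ≠ p i) :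
    ∀ i : Fin ℓ, i.val ≠ 0 → ∃ t : ℝ,
      p i = q + t • ((a * (q.1 - (p ⟨0, by omega⟩).1),
        b * (q.2 - (p ⟨0, by omega⟩).2)) : ℝ × ℝ) := by
  intro i hi
  set i₀ : Fin ℓ := ⟨0, by omega⟩
  set d : ℝ × ℝ := (a * (q.1 - (p i₀).1), b * (q.2 - (p i₀).2))
  have hd : d ≠ 0 := by
    intro h
    simp only [d, Prod.ext_iff, Prod.fst_zero, Prod.snd_zero, mul_eq_zero, ha.ne',
      (ha.trans hab).ne', sub_eq_zero, false_or] at h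
    exact hq i₀ (Prod.ext h.1 h.2)
  have hminor : d.1 * (p i - q).2 - d.2 * (p i - q).1 = 0 := by
    have hdet := Matrix.det_submatrix_eq_zero_of_rank_lt
      (A := Jmat ℓ a b p q) (by rw [Fintype.card_fin]; exact hsing) ![i₀, i]
    simp only [Matrix.det_fin_two, Matrix.submatrix_apply, Jmat, Matrix.cons_val_zero,
      Matrix.cons_val_one, Matrix.cons_val_fin_one, id_eq, hi, i₀, ↓reduceIte] at hdet
    simp only [d, Prod.fst_sub, Prod.snd_sub]
    linear_combination -hdet
  obtain ⟨t, ht⟩ := Prod.exists_eq_smul_of_mul_sub_mul_eq_zero hd hminor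
  exact ⟨t, by rw [← ht, add_sub_cancel]⟩
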